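/- Let φ be an s-model of a finite tree T with maximum degree at most 4, let v be a vertex of T, and let b_φ(v) denote the maximum of b_φ(Q) over all leaf-to-leaf paths Q of T containing v. If v is not balanced in φ, then b_φ(v) = b^1 + b^2 + 1, where b^1 and b^2 are the two largest values among b^ℓ_φ(v,u) over the neighbors u of v. -/

import Mathlib

open SimpleGraph

/-- The closed axis-parallel grid segment (bounding box) with corners `p` and `q`.
For axis-aligned `p`, `q` this is exactly the straight segment joining them. -/
def seg (p q : ℤ × ℤ) : Set (ℤ × ℤ) :=
  {r | r.1 ∈ Set.uIcc p.1 q.1 ∧ r.2 ∈ Set.uIcc p.2 q.2}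

/-- A straight model (s-model) of a graph `G`: an injective drawing of the vertices on the
grid `ℤ × ℤ` such that every edge is a horizontal or vertical straight segment, and segments
of distinct edges meet only at the image of a common endpoint. -/
structure SModel {V : Type*} (G : SimpleGraph V) where
  toFun : V → ℤ × ℤ
  inj : Function.Injective toFun
  axisAligned : ∀ ⦃u v : V⦄, G.Adj u v →
    ((toFun u).1 = (toFun v).1 ∧ (toFun u).2 ≠ (toFun v).2) ∨
    ((toFun u).2 = (toFun v).2 ∧ (toFun u).1 ≠ (toFun v).1)
  noCross : ∀ ⦃u v x y : V⦄, G.Adj u v → G.Adj x y → s(u, v) ≠ s(x, y) →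
    ∀ r ∈ seg (toFun u) (toFun v) ∩ seg (toFun x) (toFun y),
      ∃ w : V, (w = u ∨ w = v) ∧ (w = x ∨ w = y) ∧ toFun w = r

/-- The drawing `φ` bends at `b` when passing `a, b, c`: one of the two segments is
vertical and the other horizontal. -/
def bendAt {V : Type*} (φ : V → ℤ × ℤ) (a b c : V) : Prop :=
  ((φ a).1 = (φ b).1 ∧ (φ b).2 = (φ c).2) ∨
  ((φ a).2 = (φ b).2 ∧ (φ b).1 = (φ c).1)

instance {V : Type*} (φ : V → ℤ × ℤ) (a b c : V) : Decidable (bendAt φ a b c) := by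
  unfold bendAt; infer_instance

/-- The list of internal vertices, in order, at which the drawing of the given vertex list
bends. -/
def bendVertices {V : Type*} (φ : V → ℤ × ℤ) : List V → List V
  | a :: b :: c :: rest =>
      (if bendAt φ a b c then [b] else []) ++ bendVertices φ (b :: c :: rest)
  | _ => []

/-- The number of bends of (the drawing of) a vertex list. -/
def bends {V : Type*} (φ : V → ℤ × ℤ) (L : List V) : ℕ :=
  (bendVertices φ L).length

section Defs

variable {V : Type*} [Fintype V]

/-- `b(φ)`: the maximum number of bends over all leaf-to-leaf paths (0 if there are none). -/
noncomputable def bendNum {G : SimpleGraph V} [DecidableRel G.Adj] (M : SModel G) : ℕ :=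
  sSup {n | ∃ (a b : V) (W : G.Walk a b), W.IsPath ∧ G.degree a = 1 ∧ G.degree b = 1 ∧
    bends M.toFun W.support = n}

/-- `b(T)`: the minimum of `b(φ)` over all s-models `φ`. -/
noncomputable def treeBendNum (G : SimpleGraph V) [DecidableRel G.Adj] : ℕ :=
  sInf {n | ∃ M : SModel G, bendNum M = n}

/-- `b^ℓ_φ(p, v)`: the maximum number of bends over all paths from `p` to a leaf that
contain `v`. -/
noncomputable def leafBend {G : SimpleGraph V} [DecidableRel G.Adj] (M : SModel G)
    (p v : V) : ℕ :=
  sSup {n | ∃ (f : V) (W : G.Walk p f), W.IsPath ∧ G.degree f = 1 ∧ v ∈ W.support ∧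
    bends M.toFun W.support = n}

/-- `b^ℓ_T(p, v)`: the minimum of `b^ℓ_φ(p, v)` over all s-models `φ`. -/
noncomputable def leafBendMin (G : SimpleGraph V) [DecidableRel G.Adj] (p v : V) : ℕ :=
  sInf {n | ∃ M : SModel G, leafBend M p v = n}

/-- `b_φ(v)`: the maximum number of bends over all leaf-to-leaf paths containing `v`. -/
noncomputable def bendNumAt {G : SimpleGraph V} [DecidableRel G.Adj] (M : SModel G)
    (v : V) : ℕ :=
  sSup {n | ∃ (a b : V) (W : G.Walk a b), W.IsPath ∧ G.degree a = 1 ∧ G.degree b = 1 ∧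
    v ∈ W.support ∧ bends M.toFun W.support = n}

/-- `p`, `q`, `r` lie on a common horizontal or vertical grid line. -/
def collinearGrid (p q r : ℤ × ℤ) : Prop :=
  (p.1 = q.1 ∧ q.1 = r.1) ∨ (p.2 = q.2 ∧ q.2 = r.2)

/-- `v` is balanced in the s-model `M`: either it has degree at most 1, or two neighbors
realizing the two largest values of `b^ℓ_M(v, ·)` are drawn collinearly with `v`. -/
def BalancedAt {G : SimpleGraph V} [DecidableRel G.Adj] (M : SModel G) (v : V) : Prop :=
  G.degree v ≤ 1 ∨
  ∃ u1 u2 : V, u1 ≠ u2 ∧ G.Adj v u1 ∧ G.Adj v u2 ∧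
    collinearGrid (M.toFun u1) (M.toFun v) (M.toFun u2) ∧
    ∀ w : V, G.Adj v w → w ≠ u1 → w ≠ u2 →
      leafBend M v w ≤ min (leafBend M v u1) (leafBend M v u2)

/-- The value `b^ℓ_M(v, u)` of a real or virtual (`none`) neighbor `u` of `v`; virtual
neighbors have value `-1`. -/
noncomputable def optVal {G : SimpleGraph V} [DecidableRel G.Adj] (M : SModel G) (v : V) :
    Option V → ℤ
  | none => -1
  | some u => (leafBend M v u : ℤ)

/-- `u1` and `u2` are the first two entries of a nonincreasing (w.r.t. `b^ℓ_M(v, ·)`)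
ordering of the real neighbors of `v` other than `p`, padded at the end with virtual
neighbors `none`. -/
def TopTwo {G : SimpleGraph V} [DecidableRel G.Adj] (M : SModel G) (p v : V) :
    Option V → Option V → Prop
  | none, u2 => u2 = none ∧ ∀ w, G.Adj v w → w = p
  | some a, none => G.Adj v a ∧ a ≠ p ∧ ∀ w, G.Adj v w → w ≠ p → w = a
  | some a, some b => G.Adj v a ∧ a ≠ p ∧ G.Adj v b ∧ b ≠ p ∧ a ≠ b ∧
      leafBend M v b ≤ leafBend M v a ∧
      ∀ w, G.Adj v w → w ≠ p → w ≠ a → w ≠ b → leafBend M v w ≤ leafBend M v b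

/-- Criticality of an ordered pair in an s-model `M`: every pair `(p, ∅)` is critical, and an
ordered edge `(p, v)` is critical if, for the first two entries `u1, u2` of some nonincreasing
ordering of the other neighbors of `v`, either `b^ℓ_M(p,v) = b^1` and `(v, u1)` is critical, or
`b^ℓ_M(p,v) = b^2 + 1` and both `(v, u1)` and `(v, u2)` are critical. -/
inductive Critical {G : SimpleGraph V} [DecidableRel G.Adj] (M : SModel G) :
    V → Option V → Prop
  | base (p : V) : Critical M p none
  | top1 (p v : V) (u1 u2 : Option V) (hadj : G.Adj p v)
      (htop : TopTwo M p v u1 u2)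
      (hb : (leafBend M p v : ℤ) = optVal M v u1)
      (hc : Critical M v u1) : Critical M p (some v)
  | top2 (p v : V) (u1 u2 : Option V) (hadj : G.Adj p v)
      (htop : TopTwo M p v u1 u2)
      (hb : (leafBend M p v : ℤ) = optVal M v u2 + 1)
      (hc1 : Critical M v u1) (hc2 : Critical M v u2) : Critical M p (some v)

end Defs

/-- Membership in the class of trees of the statement: a tree with maximum degree at most 4
having a vertex `r` of degree exactly 2 with distinct neighbors `r1`, `r2`, admitting a
balanced s-model `M` with `b^ℓ_M(r,r1) = b^ℓ_M(r,r2) = k - 1`. -/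
def ClassProp (k : ℕ) (V : Type) [Fintype V] (G : SimpleGraph V)
    [DecidableRel G.Adj] : Prop :=
  G.IsTree ∧ (∀ v, G.degree v ≤ 4) ∧
  ∃ (r r1 r2 : V) (M : SModel G),
    G.degree r = 2 ∧ G.Adj r r1 ∧ G.Adj r r2 ∧ r1 ≠ r2 ∧
    (∀ v, BalancedAt M v) ∧ leafBend M r r1 = k - 1 ∧ leafBend M r r2 = k - 1

/-- The full binary tree of height `k`, with vertex set the lists over `Bool` of length at
most `k`, rooted at the empty list; children of `l` are the lists `c :: l`. -/
def fullBinTree (k : ℕ) : SimpleGraph {l : List Bool // l.length ≤ k} :=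
  SimpleGraph.fromRel (fun a b => ∃ c : Bool, (b : List Bool) = c :: (a : List Bool))

/-- A tree with maximum degree at most 4 and minimum bend number `k`. -/
def TreeProp (k : ℕ) (V : Type) [Fintype V] (G : SimpleGraph V)
    [DecidableRel G.Adj] : Prop :=
  G.IsTree ∧ (∀ v, G.degree v ≤ 4) ∧ treeBendNum G = k

/-- The grid graph on `ℤ × ℤ`: two grid points are adjacent iff their distance is 1. -/
def gridGraph : SimpleGraph (ℤ × ℤ) :=
  SimpleGraph.fromRel (fun p q =>
    (p.1 = q.1 ∧ (p.2 - q.2).natAbs = 1) ∨ (p.2 = q.2 ∧ (p.1 - q.1).natAbs = 1))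

/-- `G` is a `B_k`-EPG graph: it has an EPG model by grid paths each with at most `k` bends;
distinct vertices are adjacent iff the corresponding grid paths share a grid edge. -/
def IsBkEPG {X : Type*} (G : SimpleGraph X) (k : ℕ) : Prop :=
  ∃ (s t : X → ℤ × ℤ) (P : ∀ x : X, gridGraph.Walk (s x) (t x)),
    (∀ x, (P x).IsPath) ∧ (∀ x, bends (id : ℤ × ℤ → ℤ × ℤ) (P x).support ≤ k) ∧
    ∀ x y : X, x ≠ y → (G.Adj x y ↔ ∃ e, e ∈ (P x).edges ∧ e ∈ (P y).edges)

/-- `⟨T, (Q x)_{x}⟩` is a VPT model of `G`: the `Q x` are pairwise distinct paths of the host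
tree `T`, and distinct vertices of `G` are adjacent iff their paths share a vertex of `T`. -/
def IsVPTModel {X W : Type*} (G : SimpleGraph X) (T : SimpleGraph W)
    (s t : X → W) (Q : ∀ x : X, T.Walk (s x) (t x)) : Prop :=
  (∀ x, (Q x).IsPath) ∧
  (∀ x y : X, x ≠ y → {w : W | w ∈ (Q x).support} ≠ {w : W | w ∈ (Q y).support}) ∧
  (∀ x y : X, x ≠ y → (G.Adj x y ↔ ∃ w : W, w ∈ (Q x).support ∧ w ∈ (Q y).support))

/-- A host tree with maximum degree at most 3 and minimum bend number `k`. -/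
def HostProp (k : ℕ) (W : Type) [Fintype W] (T : SimpleGraph W)
    [DecidableRel T.Adj] : Prop :=
  T.IsTree ∧ (∀ v, T.degree v ≤ 3) ∧ treeBendNum T = k


/-!
Split a leaf-to-leaf path through `v` at `v`: the two halves are paths from `v` to leaves that
leave `v` through distinct neighbours `w₁ ≠ w₂`, so the path has at most
`b^ℓ(v,w₁) + 1 + b^ℓ(v,w₂) ≤ b¹ + b² + 1` bends. Conversely, in a tree the optimal leaf
paths through `u¹` and `u²` meet only at `v`, so they glue to a leaf-to-leaf path; as `v` is
not balanced, `u¹, v, u²` are not collinear, so the glued path bends at `v` and has exactly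
`b¹ + b² + 1` bends.
-/

section Bends

variable {V : Type*} (φ : V → ℤ × ℤ)

lemma bendAt_comm (a b c : V) : bendAt φ a b c ↔ bendAt φ c b a := by
  unfold bendAt
  tauto

@[simp]
lemma bends_pair (a b : V) : bends φ [a, b] = 0 := rfl

lemma bends_cons_cons_cons (a b c : V) (L : List V) :
    bends φ (a :: b :: c :: L) = (if bendAt φ a b c then 1 else 0) + bends φ (b :: c :: L) := by
  simp only [bends, bendVertices, List.length_append]
  split <;> rfl

lemma bends_le_length : ∀ L : List V, bends φ L ≤ L.length
  | a :: b :: c :: L => by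
    have := bends_le_length (b :: c :: L)
    rw [bends_cons_cons_cons]
    simp only [List.length_cons] at *
    split <;> omega
  | [] | [_] | [_, _] => Nat.zero_le _

lemma bends_append_cons_cons_cons (x y z : V) (Q : List V) : ∀ P : List V,
    bends φ (P ++ x :: y :: z :: Q) =
      bends φ (P ++ [x, y]) + (if bendAt φ x y z then 1 else 0) + bends φ (y :: z :: Q)
  | [] => by simp [bends_cons_cons_cons]
  | [p] => by
    simp only [List.cons_append, List.nil_append, bends_cons_cons_cons, bends_pair]
    omega
  | [p, q] => by
    have := bends_append_cons_cons_cons x y z Q [q]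
    simp only [List.cons_append, List.nil_append, bends_cons_cons_cons] at this ⊢
    omega
  | p :: q :: r :: P => by
    have := bends_append_cons_cons_cons x y z Q (q :: r :: P)
    simp only [List.cons_append, bends_cons_cons_cons] at this ⊢
    omega

lemma bends_reverse : ∀ L : List V, bends φ L.reverse = bends φ L
  | a :: b :: c :: L => by
    have := bends_reverse (b :: c :: L)
    simp only [List.reverse_cons, List.append_assoc, List.cons_append, List.nil_append]
      at this ⊢
    rw [bends_append_cons_cons_cons, this, bends_cons_cons_cons]
    simp only [bendAt_comm φ c b a, bends_pair]
    omega
  | [] | [_] | [_, _] => rfl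

end Bends

namespace SimpleGraph

open Walk

variable {V : Type*} {G : SimpleGraph V}

lemma Walk.support_eq_cons_snd_cons {u v : V} (p : G.Walk u v) (hp : ¬ p.Nil) :
    p.support = u :: p.snd :: p.tail.support.tail := by
  rw [p.tail.cons_tail_support, cons_support_tail hp]

lemma Walk.bends_support_reverse_append (φ : V → ℤ × ℤ) {v a b : V} (p : G.Walk v a)
    (q : G.Walk v b) (hp : ¬ p.Nil) (hq : ¬ q.Nil) :
    bends φ (p.reverse.append q).support =
      bends φ p.support + (if bendAt φ p.snd v q.snd then 1 else 0) + bends φ q.support := by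
  have hrev := bends_reverse φ (v :: p.snd :: p.tail.support.tail)
  simp only [List.reverse_cons, List.append_assoc, List.cons_append, List.nil_append] at hrev
  rw [support_append, support_reverse, p.support_eq_cons_snd_cons hp,
    q.support_eq_cons_snd_cons hq]
  simp only [List.reverse_cons, List.tail_cons, List.append_assoc, List.cons_append,
    List.nil_append]
  rw [bends_append_cons_cons_cons, hrev]

lemma IsAcyclic.snd_eq_snd_of_mem_support (hG : G.IsAcyclic) {v a b x : V} {p : G.Walk v a}
    {q : G.Walk v b} (hp : p.IsPath) (hq : q.IsPath) (hxp : x ∈ p.support)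
    (hxq : x ∈ q.support) (hxv : x ≠ v) : p.snd = q.snd := by
  classical
  have htake := (hG.subsingleton_path v x).elim ⟨_, hp.takeUntil hxp⟩ ⟨_, hq.takeUntil hxq⟩
  rw [← p.snd_takeUntil hxv hxp, ← q.snd_takeUntil hxv hxq, Subtype.mk.inj htake]

lemma IsAcyclic.isPath_reverse_append (hG : G.IsAcyclic) {v a b : V} {p : G.Walk v a}
    {q : G.Walk v b} (hp : p.IsPath) (hq : q.IsPath) (hsnd : p.snd ≠ q.snd) :
    (p.reverse.append q).IsPath := by
  have hq' := hq.support_nodup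
  rw [← q.cons_tail_support, List.nodup_cons] at hq'
  rw [isPath_def, support_append, support_reverse, List.nodup_append]
  refine ⟨List.nodup_reverse.mpr hp.support_nodup, hq'.2, fun x hxp y hyq hxy => ?_⟩
  subst hxy
  exact hsnd (hG.snd_eq_snd_of_mem_support hp hq (List.mem_reverse.mp hxp)
    (List.mem_of_mem_tail hyq) (ne_of_mem_of_not_mem hyq hq'.1))

variable [Fintype V]

lemma Walk.IsPath.bends_support_le_card (φ : V → ℤ × ℤ) {a b : V} {W : G.Walk a b}
    (hW : W.IsPath) : bends φ W.support ≤ Fintype.card V :=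
  (bends_le_length φ _).trans (W.length_support ▸ hW.length_lt)

variable [DecidableRel G.Adj]

lemma IsAcyclic.exists_isPath_extend_to_leaf (hG : G.IsAcyclic) {v w : V} (p : G.Walk v w)
    (hp : p.IsPath) (hne : ¬ p.Nil) :
    ∃ (f : V) (q : G.Walk v f), q.IsPath ∧ G.degree f = 1 ∧ p.support ⊆ q.support := by
  by_cases hw : G.degree w = 1
  · exact ⟨w, p, hp, hw, List.Subset.refl _⟩
  have hpen : p.penultimate ∈ G.neighborFinset w := by simpa using (p.adj_penultimate hne).symm
  have hcard : 1 < (G.neighborFinset w).card := by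
    have := Finset.card_pos.mpr ⟨_, hpen⟩
    rw [card_neighborFinset_eq_degree] at this ⊢
    omega
  obtain ⟨g, hg, hgpen⟩ := Finset.exists_mem_ne hcard p.penultimate
  rw [mem_neighborFinset] at hg
  have hgp : g ∉ p.support := fun h => hgpen (hG.eq_penultimate_of_adj_end hp hg h)
  obtain ⟨f, q, hq, hf, hsub⟩ := hG.exists_isPath_extend_to_leaf (p.concat hg)
    (hp.concat hgp hg) (not_nil_iff_lt_length.mpr (by simp))
  exact ⟨f, q, hq, hf, fun x hx => hsub (by simp [support_concat, hx])⟩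
termination_by Fintype.card V - p.length
decreasing_by
  have := hp.length_lt
  rw [length_concat]
  omega

end SimpleGraph

lemma add_le_add_top_two {α : Type*} {f : α → ℕ} {P : α → Prop} {u₁ u₂ w₁ w₂ : α}
    (h₂₁ : f u₂ ≤ f u₁) (htop : ∀ w, P w → w ≠ u₁ → w ≠ u₂ → f w ≤ f u₂) (hw₁ : P w₁)
    (hw₂ : P w₂) (hw : w₁ ≠ w₂) : f w₁ + f w₂ ≤ f u₁ + f u₂ := by
  have hle₂ : ∀ w, P w → w ≠ u₁ → f w ≤ f u₂ := fun w hw h₁ => by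
    by_cases h₂ : w = u₂
    · rw [h₂]
    · exact htop w hw h₁ h₂
  have hle₁ : ∀ w, P w → f w ≤ f u₁ := fun w hw => by
    by_cases h₁ : w = u₁
    · rw [h₁]
    · exact (hle₂ w hw h₁).trans h₂₁
  by_cases h : w₁ = u₁
  · subst h
    have := hle₂ w₂ hw₂ hw.symm
    omega
  · have := hle₂ w₁ hw₁ h
    have := hle₁ w₂ hw₂
    omega

namespace SModel

open SimpleGraph Walk

variable {V : Type*} {G : SimpleGraph V}

lemma bendAt_of_not_collinearGrid (M : SModel G) {v u₁ u₂ : V} (h₁ : G.Adj v u₁)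
    (h₂ : G.Adj v u₂) (h : ¬ collinearGrid (M.toFun u₁) (M.toFun v) (M.toFun u₂)) :
    bendAt M.toFun u₁ v u₂ := by
  unfold collinearGrid at h
  unfold bendAt
  rcases M.axisAligned h₁ with ⟨h₁, -⟩ | ⟨h₁, -⟩ <;>
    rcases M.axisAligned h₂ with ⟨h₂, -⟩ | ⟨h₂, -⟩ <;> grind

variable [Fintype V] [DecidableRel G.Adj] (M : SModel G)

lemma leafBend_bddAbove (p u : V) :
    BddAbove {n | ∃ (f : V) (W : G.Walk p f), W.IsPath ∧ G.degree f = 1 ∧ u ∈ W.support ∧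
      bends M.toFun W.support = n} :=
  ⟨Fintype.card V, by rintro _ ⟨f, W, hW, -, -, rfl⟩; exact hW.bends_support_le_card _⟩

lemma le_leafBend {p u f : V} {W : G.Walk p f} (hW : W.IsPath) (hf : G.degree f = 1)
    (hu : u ∈ W.support) : bends M.toFun W.support ≤ leafBend M p u :=
  le_csSup (M.leafBend_bddAbove p u) ⟨f, W, hW, hf, hu, rfl⟩

lemma exists_isPath_bends_eq_leafBend (hG : G.IsAcyclic) {v u : V} (h : G.Adj v u) :
    ∃ (f : V) (W : G.Walk v f), W.IsPath ∧ G.degree f = 1 ∧ ¬ W.Nil ∧ W.snd = u ∧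
      bends M.toFun W.support = leafBend M v u := by
  obtain ⟨f₀, W₀, hW₀, hf₀, hsub⟩ :=
    hG.exists_isPath_extend_to_leaf h.toWalk (IsPath.of_adj h) (by simp)
  obtain ⟨f, W, hW, hf, hu, hb⟩ := Nat.sSup_mem
    (by exact ⟨_, f₀, W₀, hW₀, hf₀, hsub (by simp), rfl⟩) (M.leafBend_bddAbove v u)
  refine ⟨f, W, hW, hf, fun hnil => h.ne' ?_, (hG.eq_snd_of_adj_start hW h hu).symm, hb⟩
  simpa [nil_iff_support_eq.mp hnil] using hu

lemma le_bendNumAt {v a b : V} {W : G.Walk a b} (hW : W.IsPath) (ha : G.degree a = 1)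
    (hb : G.degree b = 1) (hv : v ∈ W.support) : bends M.toFun W.support ≤ bendNumAt M v :=
  le_csSup ⟨Fintype.card V, by
    rintro _ ⟨_, _, W, hW, -, -, -, rfl⟩
    exact hW.bends_support_le_card _⟩ ⟨a, b, W, hW, ha, hb, hv, rfl⟩

lemma bendNumAt_le {v : V} {n : ℕ} (h : ∀ (a b : V) (W : G.Walk a b), W.IsPath →
    G.degree a = 1 → G.degree b = 1 → v ∈ W.support → bends M.toFun W.support ≤ n) :
    bendNumAt M v ≤ n :=
  csSup_le' (by rintro _ ⟨a, b, W, hW, ha, hb, hv, rfl⟩; exact h a b W hW ha hb hv)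

lemma exists_bends_le_leafBend_add_leafBend {v a b : V} {W : G.Walk a b} (hW : W.IsPath)
    (ha : G.degree a = 1) (hb : G.degree b = 1) (hv : v ∈ W.support) (hva : v ≠ a)
    (hvb : v ≠ b) : ∃ w₁ w₂, G.Adj v w₁ ∧ G.Adj v w₂ ∧ w₁ ≠ w₂ ∧
      bends M.toFun W.support ≤ leafBend M v w₁ + leafBend M v w₂ + 1 := by
  classical
  set p := (W.takeUntil v hv).reverse
  set q := W.dropUntil v hv
  have hpq : p.reverse.append q = W := by simp [p, q, take_spec]
  have hp : p.IsPath := (hW.takeUntil hv).reverse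
  have hq : q.IsPath := hW.dropUntil hv
  have hpn : ¬ p.Nil := not_nil_of_ne hva
  have hqn : ¬ q.Nil := not_nil_of_ne hvb
  have hsnd : p.snd ≠ q.snd :=
    (hpq ▸ hW).ne_of_mem_support_of_append (adj_snd hqn).ne' (by simp) (by simp)
  refine ⟨p.snd, q.snd, adj_snd hpn, adj_snd hqn, hsnd, ?_⟩
  have h₁ := M.le_leafBend hp ha (u := p.snd) (by simp)
  have h₂ := M.le_leafBend hq hb (u := q.snd) (by simp)
  rw [← hpq, p.bends_support_reverse_append _ q hpn hqn]
  split <;> omega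

lemma exists_isPath_bends_eq_add (hG : G.IsAcyclic) {v u₁ u₂ : V} (h₁ : G.Adj v u₁)
    (h₂ : G.Adj v u₂) (h₁₂ : u₁ ≠ u₂) (hbend : bendAt M.toFun u₁ v u₂) :
    ∃ (a b : V) (W : G.Walk a b), W.IsPath ∧ G.degree a = 1 ∧ G.degree b = 1 ∧
      v ∈ W.support ∧ bends M.toFun W.support = leafBend M v u₁ + leafBend M v u₂ + 1 := by
  obtain ⟨a, p, hp, ha, hpn, hps, hpb⟩ := M.exists_isPath_bends_eq_leafBend hG h₁
  obtain ⟨b, q, hq, hb, hqn, hqs, hqb⟩ := M.exists_isPath_bends_eq_leafBend hG h₂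
  refine ⟨a, b, p.reverse.append q, hG.isPath_reverse_append hp hq (hps ▸ hqs ▸ h₁₂), ha, hb,
    by simp, ?_⟩
  rw [p.bends_support_reverse_append _ q hpn hqn, hps, hqs, if_pos hbend, hpb, hqb]
  omega

end SModel

theorem stmt_6_general {V : Type*} [Fintype V] (G : SimpleGraph V) [DecidableRel G.Adj]
    (hT : G.IsTree) (M : SModel G)
    (v u1 u2 : V) (hnb : ¬ BalancedAt M v)
    (h1 : G.Adj v u1) (h2 : G.Adj v u2) (h12 : u1 ≠ u2)
    (h21 : leafBend M v u2 ≤ leafBend M v u1)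
    (htop : ∀ w, G.Adj v w → w ≠ u1 → w ≠ u2 → leafBend M v w ≤ leafBend M v u2) :
    bendNumAt M v = leafBend M v u1 + leafBend M v u2 + 1 := by
  have hcol : ¬ collinearGrid (M.toFun u1) (M.toFun v) (M.toFun u2) := fun hcol =>
    hnb (Or.inr ⟨u1, u2, h12, h1, h2, hcol, fun w hw hw1 hw2 =>
      le_min ((htop w hw hw1 hw2).trans h21) (htop w hw hw1 hw2)⟩)
  have hdegv : 1 < G.degree v := by
    rw [← card_neighborFinset_eq_degree]
    exact Finset.one_lt_card.mpr ⟨u1, by simpa using h1, u2, by simpa using h2, h12⟩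
  obtain ⟨a, b, X, hX, ha, hb, hvX, hXb⟩ := M.exists_isPath_bends_eq_add hT.isAcyclic h1 h2 h12
    (M.bendAt_of_not_collinearGrid h1 h2 hcol)
  refine le_antisymm (M.bendNumAt_le fun a b W hW ha hb hv => ?_)
    (hXb ▸ M.le_bendNumAt hX ha hb hvX)
  obtain ⟨w₁, w₂, hw₁, hw₂, hw, hle⟩ := M.exists_bends_le_leafBend_add_leafBend hW ha hb hv
    (by rintro rfl; omega) (by rintro rfl; omega)
  have := add_le_add_top_two h21 htop hw₁ hw₂ hw
  omega

theorem stmt_6 {V : Type*} [Fintype V] (G : SimpleGraph V) [DecidableRel G.Adj]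
    (hT : G.IsTree) (hdeg : ∀ v, G.degree v ≤ 4) (M : SModel G)
    (v u1 u2 : V) (hnb : ¬ BalancedAt M v)
    (h1 : G.Adj v u1) (h2 : G.Adj v u2) (h12 : u1 ≠ u2)
    (h21 : leafBend M v u2 ≤ leafBend M v u1)
    (htop : ∀ w, G.Adj v w → w ≠ u1 → w ≠ u2 → leafBend M v w ≤ leafBend M v u2) :
    bendNumAt M v = leafBend M v u1 + leafBend M v u2 + 1 :=
  stmt_6_general G hT M v u1 u2 hnb h1 h2 h12 h21 htop
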